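/- Let d ≥ 1, let L ∈ ℝ^{d×d} be lower triangular with L_{kk} > 0 for all k, and let μ ∈ ℝ^d. For u ∈ (0,1)^d define recursively, for k = 1, …, d: a_k(u) = (−μ_k − Σ_{j<k} L_{kj} z_j(u)) / L_{kk} and z_k(u) = Φ⁻¹(Φ(a_k(u)) + u_k·(1 − Φ(a_k(u)))), and set w(u) = ∏_{k=1}^d (1 − Φ(a_k(u))). Then for every measurable f : ℝ^d → [0, ∞): ∫_{(0,1)^d} f(z(u)) · w(u) du = ∫_{{z ∈ ℝ^d : Lz + μ ∈ O}} f(z) · ∏_{k=1}^d φ(z_k) dz. In particular, taking f ≡ 1, ∫_{(0,1)^d} w(u) du = ∫_{{z : Lz + μ ∈ O}} ∏_{k=1}^d φ(z_k) dz, the Gaussian orthant probability. -/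

import Mathlib

open MeasureTheory Matrix Real

/-- Standard normal CDF `Φ`. -/
noncomputable def stdNormalCDF (x : ℝ) : ℝ :=
  ∫ z in Set.Iic x, Real.exp (-z ^ 2 / 2) / Real.sqrt (2 * π)

/-- Inverse of the standard normal CDF (on `(0,1)`). -/
noncomputable def stdNormalCDFInv : ℝ → ℝ := Function.invFun stdNormalCDF

/-- The SOV recursion: `z_k = Φ⁻¹(Φ(a_k) + u_k (1 - Φ(a_k)))` where
`a_k = (-μ_k - ∑_{j<k} L_{kj} z_j) / L_{kk}`. -/
noncomputable def sovZ (d : ℕ) (L : Matrix (Fin d) (Fin d) ℝ) (μ u : Fin d → ℝ) :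
    ℕ → ℝ := fun k =>
  Nat.strongRecOn k (fun k ih =>
    if h : k < d then
      let kk : Fin d := ⟨k, h⟩
      let a : ℝ := (-(μ kk) - ∑ j : Fin k, L kk ⟨j.1, j.2.trans h⟩ * ih j.1 j.2) / L kk kk
      stdNormalCDFInv (stdNormalCDF a + u kk * (1 - stdNormalCDF a))
    else 0)

/-- The SOV truncation bounds `a_k = (-μ_k - ∑_{j<k} L_{kj} z_j) / L_{kk}`. -/
noncomputable def sovA (d : ℕ) (L : Matrix (Fin d) (Fin d) ℝ) (μ u : Fin d → ℝ)
    (k : Fin d) : ℝ :=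
  (-(μ k) - ∑ j : Fin k.1, L k ⟨j.1, j.2.trans k.2⟩ * sovZ d L μ u j.1) / L k k

/-!
Rather than differentiating the recursion `u ↦ z(u)`, which involves `Φ⁻¹`, we change
variables through its inverse `ψ(z)_k = (Φ(z_k) - Φ(a_k(z))) / (1 - Φ(a_k(z)))`, where
`a_k(z)` depends only on `z_j` for `j < k`. This map is explicit and smooth, its Jacobian is
lower triangular with diagonal `φ(z_k) / (1 - Φ(a_k(z)))`, and it maps `{z | Lz + μ ∈ O}`
bijectively onto `(0,1)^d`, because `Lz + μ ∈ O` says exactly that `a_k(z) < z_k` for every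
`k`. The change-of-variables formula then trades the weight `∏ (1 - Φ(a_k))` for the density
`∏ φ(z_k)`.
-/

open Set Filter Topology ProbabilityTheory

lemma gaussianPDFReal_zero_one (x : ℝ) :
    gaussianPDFReal 0 1 x = exp (-x ^ 2 / 2) / √(2 * π) := by
  simp [gaussianPDFReal, div_eq_inv_mul]

lemma stdNormalCDF_eq_integral (x : ℝ) :
    stdNormalCDF x = ∫ t in Iic x, gaussianPDFReal 0 1 t := by
  simp only [stdNormalCDF, gaussianPDFReal_zero_one]

lemma stdNormalCDF_sub_stdNormalCDF (x y : ℝ) :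
    stdNormalCDF y - stdNormalCDF x = ∫ t in x..y, gaussianPDFReal 0 1 t := by
  simp only [stdNormalCDF_eq_integral]
  exact intervalIntegral.integral_Iic_sub_Iic (integrable_gaussianPDFReal 0 1).integrableOn
    (integrable_gaussianPDFReal 0 1).integrableOn

lemma continuous_gaussianPDFReal_zero_one : Continuous (gaussianPDFReal 0 1) := by
  rw [gaussianPDFReal_def]; fun_prop

lemma hasDerivAt_stdNormalCDF (x : ℝ) :
    HasDerivAt stdNormalCDF (gaussianPDFReal 0 1 x) x := by
  have hFTC : HasDerivAt (fun y => stdNormalCDF 0 + ∫ t in (0 : ℝ)..y, gaussianPDFReal 0 1 t)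
      (gaussianPDFReal 0 1 x) x :=
    (intervalIntegral.integral_hasDerivAt_right
      ((integrable_gaussianPDFReal 0 1).intervalIntegrable)
      (continuous_gaussianPDFReal_zero_one.stronglyMeasurable.stronglyMeasurableAtFilter)
      continuous_gaussianPDFReal_zero_one.continuousAt).const_add _
  refine hFTC.congr_of_eventuallyEq (Eventually.of_forall fun y => ?_)
  simp only [← stdNormalCDF_sub_stdNormalCDF, add_sub_cancel]

@[fun_prop]
lemma differentiable_stdNormalCDF : Differentiable ℝ stdNormalCDF :=
  fun x => (hasDerivAt_stdNormalCDF x).differentiableAt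

lemma stdNormalCDF_strictMono : StrictMono stdNormalCDF := fun x y hxy => by
  rw [← sub_pos, stdNormalCDF_sub_stdNormalCDF]
  exact intervalIntegral.intervalIntegral_pos_of_pos
    (integrable_gaussianPDFReal 0 1).intervalIntegrable
    (fun t => gaussianPDFReal_pos 0 1 t one_ne_zero) hxy

lemma tendsto_stdNormalCDF_atTop : Tendsto stdNormalCDF atTop (𝓝 1) := by
  simpa only [id, ← stdNormalCDF_eq_integral, integral_gaussianPDFReal_eq_one 0 one_ne_zero] using
    (aecover_Iic tendsto_id).integral_tendsto_of_countably_generated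
      (integrable_gaussianPDFReal 0 1)

lemma tendsto_stdNormalCDF_atBot : Tendsto stdNormalCDF atBot (𝓝 0) := by
  have hIoi := (aecover_Ioi (μ := volume) tendsto_id).integral_tendsto_of_countably_generated
    (integrable_gaussianPDFReal 0 1)
  have hsum (x : ℝ) : stdNormalCDF x = 1 - ∫ t in Ioi x, gaussianPDFReal 0 1 t := by
    rw [stdNormalCDF_eq_integral, eq_sub_iff_add_eq, intervalIntegral.integral_Iic_add_Ioi
      (integrable_gaussianPDFReal 0 1).integrableOn (integrable_gaussianPDFReal 0 1).integrableOn,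
      integral_gaussianPDFReal_eq_one 0 one_ne_zero]
  simpa [funext hsum, integral_gaussianPDFReal_eq_one 0 one_ne_zero] using hIoi.const_sub 1

lemma stdNormalCDF_mem_Ioo (x : ℝ) : stdNormalCDF x ∈ Ioo 0 1 :=
  ⟨(stdNormalCDF_strictMono.monotone.le_of_tendsto tendsto_stdNormalCDF_atBot (x - 1)).trans_lt
      (stdNormalCDF_strictMono (by linarith)),
    (stdNormalCDF_strictMono (by linarith : x < x + 1)).trans_le
      (stdNormalCDF_strictMono.monotone.ge_of_tendsto tendsto_stdNormalCDF_atTop (x + 1))⟩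

lemma stdNormalCDFInv_stdNormalCDF (x : ℝ) : stdNormalCDFInv (stdNormalCDF x) = x :=
  Function.leftInverse_invFun stdNormalCDF_strictMono.injective x

lemma stdNormalCDF_stdNormalCDFInv {y : ℝ} (hy : y ∈ Ioo 0 1) :
    stdNormalCDF (stdNormalCDFInv y) = y :=
  Function.invFun_eq <|
    mem_range_of_exists_le_of_exists_ge differentiable_stdNormalCDF.continuous
    (tendsto_stdNormalCDF_atBot.eventually_le_const hy.1).exists
    (tendsto_stdNormalCDF_atTop.eventually_const_le hy.2).exists

lemma one_sub_stdNormalCDF_pos (x : ℝ) : 0 < 1 - stdNormalCDF x :=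
  sub_pos.2 (stdNormalCDF_mem_Ioo x).2

section Calculus

variable {ι E : Type*} [Fintype ι] [DecidableEq ι]

lemma HasFDerivAt.apply_single_eq [NormedAddCommGroup E] [NormedSpace ℝ E]
    {F : (ι → ℝ) → E} {F' : (ι → ℝ) →L[ℝ] E} {x : ι → ℝ} {j : ι} {c : E}
    (hF : HasFDerivAt F F' x) (hc : HasDerivAt (fun t => F (Function.update x j t)) c (x j)) :
    F' (Pi.single j 1) = c := by
  rw [← Function.update_eq_self j x] at hF
  exact (hF.comp_hasDerivAt (x j) (hasDerivAt_update x j (x j))).unique hc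

lemma LinearMap.det_eq_prod_of_lowerTriangular [LinearOrder ι] {R : Type*} [CommRing R]
    (A : (ι → R) →ₗ[R] ι → R) (hA : ∀ i j, i < j → A (Pi.single j 1) i = 0) :
    LinearMap.det A = ∏ i, A (Pi.single i 1) i := by
  rw [← LinearMap.det_toMatrix']
  exact Matrix.det_of_isLowerTriangular _ fun i j hij => hA i j hij

end Calculus

lemma Fin.sum_Iio_eq_sum_univ {M : Type*} [AddCommMonoid M] {n : ℕ} (k : Fin n)
    (F : Fin n → M) : ∑ j ∈ Finset.Iio k, F j = ∑ j : Fin k.1, F ⟨j.1, j.2.trans k.2⟩ := by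
  have hIio : Finset.Iio k = Finset.univ.map (Fin.castLEEmb k.2.le) := by
    ext j
    simp only [Finset.mem_Iio, Finset.mem_map, Finset.mem_univ, true_and]
    exact ⟨fun hj => ⟨⟨j, hj⟩, rfl⟩, by rintro ⟨i, rfl⟩; exact i.2⟩
  rw [hIio, Finset.sum_map]
  rfl

section SeparationOfVariables

variable {d : ℕ} (L : Matrix (Fin d) (Fin d) ℝ) (μ : Fin d → ℝ)

noncomputable def sovBound (z : Fin d → ℝ) (k : Fin d) : ℝ :=
  (-(μ k) - ∑ j : Fin k.1, L k ⟨j.1, j.2.trans k.2⟩ * z ⟨j.1, j.2.trans k.2⟩) / L k k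

noncomputable def sovPoint (u : Fin d → ℝ) : Fin d → ℝ := fun k => sovZ d L μ u k.1

noncomputable def sovInv (z : Fin d → ℝ) : Fin d → ℝ := fun k =>
  (stdNormalCDF (z k) - stdNormalCDF (sovBound L μ z k)) / (1 - stdNormalCDF (sovBound L μ z k))

lemma sovA_eq_sovBound (u : Fin d → ℝ) (k : Fin d) :
    sovA d L μ u k = sovBound L μ (sovPoint L μ u) k := rfl

lemma sovPoint_apply (u : Fin d → ℝ) (k : Fin d) :
    sovPoint L μ u k = stdNormalCDFInv (stdNormalCDF (sovBound L μ (sovPoint L μ u) k) +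
      u k * (1 - stdNormalCDF (sovBound L μ (sovPoint L μ u) k))) := by
  simp only [sovPoint, sovZ]
  rw [Nat.strongRecOn_eq, dif_pos k.2]
  rfl

variable {L μ}

lemma sovBound_congr {z z' : Fin d → ℝ} {k : Fin d} (h : ∀ j < k, z j = z' j) :
    sovBound L μ z k = sovBound L μ z' k := by
  unfold sovBound
  congr 2
  exact Finset.sum_congr rfl fun j _ => by rw [h _ (Fin.mk_lt_mk.2 j.2)]

lemma sovPoint_eq_of_forall {u z : Fin d → ℝ}
    (hz : ∀ k, z k = stdNormalCDFInv (stdNormalCDF (sovBound L μ z k) +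
      u k * (1 - stdNormalCDF (sovBound L μ z k)))) :
    sovPoint L μ u = z := by
  funext k
  induction k using WellFoundedLT.induction with
  | _ k ih => rw [sovPoint_apply, hz k, sovBound_congr ih]

lemma sovPoint_sovInv (z : Fin d → ℝ) : sovPoint L μ (sovInv L μ z) = z :=
  sovPoint_eq_of_forall fun k => by
    rw [sovInv, div_mul_cancel₀ _ (one_sub_stdNormalCDF_pos _).ne', add_sub_cancel,
      stdNormalCDFInv_stdNormalCDF]

lemma sovInv_sovPoint {u : Fin d → ℝ} (hu : ∀ i, u i ∈ Ioo 0 1) :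
    sovInv L μ (sovPoint L μ u) = u := by
  funext k
  set c := stdNormalCDF (sovBound L μ (sovPoint L μ u) k)
  obtain ⟨hc0, hc1⟩ := stdNormalCDF_mem_Ioo (sovBound L μ (sovPoint L μ u) k)
  obtain ⟨hu0, hu1⟩ := hu k
  have hy : c + u k * (1 - c) ∈ Ioo 0 1 := by
    constructor <;> nlinarith
  rw [sovInv, sovPoint_apply, stdNormalCDF_stdNormalCDFInv hy, add_sub_cancel_left,
    mul_div_cancel_right₀ _ (one_sub_stdNormalCDF_pos _).ne']

lemma sovInv_mem_Ioo_iff (z : Fin d → ℝ) (k : Fin d) :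
    sovInv L μ z k ∈ Ioo 0 1 ↔ sovBound L μ z k < z k := by
  have hpos := one_sub_stdNormalCDF_pos (sovBound L μ z k)
  rw [sovInv, mem_Ioo, div_pos_iff_of_pos_right hpos, div_lt_one hpos, sub_pos,
    sub_lt_sub_iff_right, stdNormalCDF_strictMono.lt_iff_lt]
  exact and_iff_left (stdNormalCDF_mem_Ioo _).2

lemma mulVec_apply_of_isLowerTriangular (hL : L.IsLowerTriangular)
    (z : Fin d → ℝ) (k : Fin d) :
    (L *ᵥ z) k =
      ∑ j : Fin k.1, L k ⟨j.1, j.2.trans k.2⟩ * z ⟨j.1, j.2.trans k.2⟩ + L k k * z k := by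
  rw [mulVec, dotProduct, ← Finset.sum_subset (Finset.subset_univ (Finset.Iic k))
      fun j _ hj => by rw [hL (by simpa using hj), zero_mul],
    ← Finset.Iio_insert, Finset.sum_insert Finset.notMem_Iio_self, add_comm,
    Fin.sum_Iio_eq_sum_univ]

lemma mulVec_add_pos_iff (hL : L.IsLowerTriangular)
    (hLdiag : ∀ k : Fin d, 0 < L k k) (z : Fin d → ℝ) (k : Fin d) :
    0 < (L *ᵥ z + μ) k ↔ sovBound L μ z k < z k := by
  rw [Pi.add_apply, mulVec_apply_of_isLowerTriangular hL, sovBound, div_lt_iff₀ (hLdiag k)]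
  constructor <;> intro <;> linarith

lemma image_sovInv_orthant (hL : L.IsLowerTriangular)
    (hLdiag : ∀ k : Fin d, 0 < L k k) :
    sovInv L μ '' {z | ∀ i, 0 < (L *ᵥ z + μ) i} = {u | ∀ i, u i ∈ Ioo 0 1} := by
  have hpre : {z | ∀ i, 0 < (L *ᵥ z + μ) i} = sovInv L μ ⁻¹' {u | ∀ i, u i ∈ Ioo 0 1} := by
    ext z
    simp only [mem_ofPred_eq, mem_preimage, sovInv_mem_Ioo_iff, mulVec_add_pos_iff hL hLdiag]
  rw [hpre]
  exact image_preimage_eq_of_subset fun u hu => ⟨_, sovInv_sovPoint hu⟩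

@[fun_prop]
lemma differentiable_sovBound (k : Fin d) : Differentiable ℝ (sovBound L μ · k) := by
  unfold sovBound
  fun_prop

lemma differentiable_sovInv : Differentiable ℝ (sovInv L μ) := by
  refine differentiable_pi.2 fun k => ?_
  simp only [sovInv, div_eq_mul_inv]
  fun_prop (disch := exact fun z => (one_sub_stdNormalCDF_pos _).ne')

lemma sovInv_update_of_lt (z : Fin d → ℝ) {k j : Fin d} (h : k < j) (t : ℝ) :
    sovInv L μ (Function.update z j t) k = sovInv L μ z k := by
  rw [sovInv, sovInv, Function.update_of_ne h.ne,
    sovBound_congr fun i hi => Function.update_of_ne (hi.trans h).ne _ _]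

lemma sovInv_update_self (z : Fin d → ℝ) (k : Fin d) (t : ℝ) :
    sovInv L μ (Function.update z k t) k = (stdNormalCDF t - stdNormalCDF (sovBound L μ z k)) /
      (1 - stdNormalCDF (sovBound L μ z k)) := by
  rw [sovInv, Function.update_self, sovBound_congr fun i hi => Function.update_of_ne hi.ne _ _]

lemma det_fderiv_sovInv (z : Fin d → ℝ) :
    (fderiv ℝ (sovInv L μ) z).det =
      ∏ k, gaussianPDFReal 0 1 (z k) / (1 - stdNormalCDF (sovBound L μ z k)) := by
  have hF := hasFDerivAt_pi'.1 (differentiable_sovInv (L := L) (μ := μ) z).hasFDerivAt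
  rw [ContinuousLinearMap.det, LinearMap.det_eq_prod_of_lowerTriangular]
  · refine Finset.prod_congr rfl fun k _ => (hF k).apply_single_eq ?_
    simp_rw [sovInv_update_self]
    exact ((hasDerivAt_stdNormalCDF _).sub_const _).div_const _
  · intro k j hkj
    refine (hF k).apply_single_eq ?_
    simp_rw [sovInv_update_of_lt z hkj]
    exact hasDerivAt_const _ _

end SeparationOfVariables

theorem stmt16_general (d : ℕ)
    (L : Matrix (Fin d) (Fin d) ℝ)
    (hLtri : ∀ k j : Fin d, k < j → L k j = 0)
    (hLdiag : ∀ k : Fin d, 0 < L k k)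
    (μ : Fin d → ℝ)
    (f : (Fin d → ℝ) → ℝ) :
    ∫ u in {u : Fin d → ℝ | ∀ i, u i ∈ Set.Ioo (0 : ℝ) 1},
        f (fun k => sovZ d L μ u k.1) *
          ∏ k : Fin d, (1 - stdNormalCDF (sovA d L μ u k)) =
      ∫ z in {z : Fin d → ℝ | ∀ i, 0 < (L *ᵥ z + μ) i},
        f z * ∏ k : Fin d, Real.exp (-(z k) ^ 2 / 2) / Real.sqrt (2 * π) := by
  have hT : MeasurableSet {z : Fin d → ℝ | ∀ i, 0 < (L *ᵥ z + μ) i} := by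
    simp only [ofPred_forall]
    exact .iInter fun i => measurableSet_lt measurable_const (by fun_prop)
  rw [← image_sovInv_orthant (fun i j h => hLtri i j h) hLdiag,
    integral_image_eq_integral_abs_det_fderiv_smul volume hT
      (fun z _ => (differentiable_sovInv z).hasFDerivAt.hasFDerivWithinAt)
      (Function.LeftInverse.injective sovPoint_sovInv).injOn]
  refine setIntegral_congr_fun hT fun z _ => ?_
  have hw (k : Fin d) := one_sub_stdNormalCDF_pos (sovBound L μ z k)
  simp only [sovA_eq_sovBound, ← sovPoint.eq_def, sovPoint_sovInv, det_fderiv_sovInv,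
    ← gaussianPDFReal_zero_one, smul_eq_mul]
  rw [abs_of_pos <| Finset.prod_pos fun k _ =>
      div_pos (gaussianPDFReal_pos 0 1 _ one_ne_zero) (hw k),
    mul_left_comm, ← Finset.prod_mul_distrib]
  simp_rw [div_mul_cancel₀ _ (hw _).ne']

theorem stmt16 (d : ℕ) (hd : 1 ≤ d)
    (L : Matrix (Fin d) (Fin d) ℝ)
    (hLtri : ∀ k j : Fin d, k < j → L k j = 0)
    (hLdiag : ∀ k : Fin d, 0 < L k k)
    (μ : Fin d → ℝ)
    (f : (Fin d → ℝ) → ℝ) (hf : Measurable f) (hf0 : ∀ z, 0 ≤ f z) :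
    ∫ u in {u : Fin d → ℝ | ∀ i, u i ∈ Set.Ioo (0 : ℝ) 1},
        f (fun k => sovZ d L μ u k.1) *
          ∏ k : Fin d, (1 - stdNormalCDF (sovA d L μ u k)) =
      ∫ z in {z : Fin d → ℝ | ∀ i, 0 < (L *ᵥ z + μ) i},
        f z * ∏ k : Fin d, Real.exp (-(z k) ^ 2 / 2) / Real.sqrt (2 * π) :=
  stmt16_general d L hLtri hLdiag μ f
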